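/- Rawlings's insertion lemma: there is a bijection φ from S_{n-1} × {0,1,…,n-1} to S_n such that for every π ∈ S_{n-1} and 0 ≤ c ≤ n-1, rdes(φ(π,c)) = rdes(π) if 0 ≤ c ≤ rdes(π)+r-1 and rdes(φ(π,c)) = rdes(π)+1 otherwise, and rmaj(φ(π,c)) = rmaj(π) + c. -/

import Mathlib

/-! Write `π ∈ S_m` on the letters `0, …, m - 1`. Inserting the new largest letter `m` into
slot `k ∈ {0, …, m}` raises `rdes` by one unless the slot is *preserving*: the last slot, a slot
inside an `r`-descent, or the slot just before a letter larger than `m - r`; there are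
`rdes π + min m (r - 1) + 1` of them. Counting how descents shift and which new `r`-inversions
the letter `m` creates, `rmaj` rises by the number of preserving slots to the right of `k`, plus
`k + 1` if `k` itself is not preserving. This is Rawlings's label of `k`: preserving slots are
numbered `0, 1, …` from right to left, the others continue from left to right, so the labelling
is a bijection onto `{0, …, m}` and `φ (π, c)` inserts `m` into the slot labelled `c`. -/

open Finset Equiv

namespace PaperStat

noncomputable section

attribute [local instance] Classical.propDecidable

/-- number of inversions of a permutation (pairs i<j with π i > π j) -/
def inv {n : ℕ} (π : Perm (Fin n)) : ℕ :=
  (univ.filter (fun p : Fin n × Fin n => p.1 < p.2 ∧ π p.2 < π p.1)).card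

/-- pairs (i, i+1) forming an r-descent -/
def desSet {n : ℕ} (r : ℕ) (π : Perm (Fin n)) : Finset (Fin n × Fin n) :=
  univ.filter (fun p : Fin n × Fin n =>
    (p.2 : ℕ) = (p.1 : ℕ) + 1 ∧ (π p.2 : ℕ) + r ≤ (π p.1 : ℕ))

/-- r-descent number -/
def rdes {n : ℕ} (r : ℕ) (π : Perm (Fin n)) : ℕ := (desSet r π).card

/-- r-major index: sum of (1-based) r-descent positions plus |rInv| -/
def rmaj {n : ℕ} (r : ℕ) (π : Perm (Fin n)) : ℕ :=
  (∑ p ∈ desSet r π, ((p.1 : ℕ) + 1)) +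
  (univ.filter (fun p : Fin n × Fin n =>
      p.1 < p.2 ∧ (π p.2 : ℕ) < (π p.1 : ℕ) ∧ (π p.1 : ℕ) < (π p.2 : ℕ) + r)).card

/-- descent number -/
def des {n : ℕ} (π : Perm (Fin n)) : ℕ := rdes 1 π

/-- major index -/
def maj {n : ℕ} (π : Perm (Fin n)) : ℕ := ∑ p ∈ desSet 1 π, ((p.1 : ℕ) + 1)

/-- i is a g-gap L-level excedance place (1-based: π_i ≥ i+g and π_i ≥ L) -/
def excp {n : ℕ} (g L : ℕ) (π : Perm (Fin n)) (i : Fin n) : Prop :=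
  (i : ℕ) + g ≤ (π i : ℕ) ∧ L ≤ (π i : ℕ) + 1

/-- g-gap ℓ-level excedance number: positions i ≥ ℓ (1-based) with π_i ≥ i+g -/
def gexc {n : ℕ} (g l : ℕ) (π : Perm (Fin n)) : ℕ :=
  (univ.filter (fun i : Fin n => l ≤ (i : ℕ) + 1 ∧ (i : ℕ) + g ≤ (π i : ℕ))).card

/-- inversions of the subword of π on positions satisfying P -/
def invOn {n : ℕ} (π : Perm (Fin n)) (P : Fin n → Prop) : ℕ :=
  (univ.filter (fun p : Fin n × Fin n =>
    P p.1 ∧ P p.2 ∧ p.1 < p.2 ∧ π p.2 < π p.1)).card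

/-- g-gap L-level Denert statistic: Σ_{i ∈ gExcp}(i+g-1) (1-based) + inversions
of the excedance subword + inversions of the non-excedance subword -/
def gden {n : ℕ} (g L : ℕ) (π : Perm (Fin n)) : ℕ :=
  (∑ i ∈ univ.filter (fun i : Fin n => excp g L π i), ((i : ℕ) + g)) +
  invOn π (fun i => excp g L π i) +
  invOn π (fun i => ¬ excp g L π i)

section SlotLabel

variable (p : ℕ → Prop) (m : ℕ)

def slotLabel (k : ℕ) : ℕ :=
  if p k then #((Ioc k m).filter p) else #((Iic m).filter p) + #((Iio k).filter (¬ p ·))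

variable {p m}

lemma slotLabel_strictAntiOn : StrictAntiOn (slotLabel p m) {k | k ≤ m ∧ p k} := by
  rintro k ⟨-, hk⟩ k' ⟨hk'm, hk'⟩ hlt
  simp only [slotLabel, hk, hk', if_true]
  refine card_lt_card ((ssubset_iff_of_subset ?_).2 ⟨k', ?_, ?_⟩)
  · exact filter_subset_filter _ (Ioc_subset_Ioc_left hlt.le)
  · simp [hlt, hk'm, hk']
  · simp

lemma slotLabel_strictMonoOn : StrictMonoOn (slotLabel p m) {k | ¬ p k} := by
  intro k (hk : ¬ p k) k' (hk' : ¬ p k') hlt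
  simp only [slotLabel, hk, hk', if_false, add_lt_add_iff_left]
  refine card_lt_card ((ssubset_iff_of_subset ?_).2 ⟨k, ?_, ?_⟩)
  · exact filter_subset_filter _ (Iio_subset_Iio hlt.le)
  · simp [hlt, hk]
  · simp

lemma slotLabel_lt_iff {k : ℕ} (hk : k ≤ m) :
    slotLabel p m k < #((Iic m).filter p) ↔ p k := by
  by_cases hpk : p k
  · simp only [slotLabel, hpk, if_true, iff_true]
    refine card_lt_card ((ssubset_iff_of_subset ?_).2 ⟨k, ?_, ?_⟩)
    · exact filter_subset_filter _ fun x hx => mem_Iic.2 (mem_Ioc.1 hx).2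
    · simp [hk, hpk]
    · simp
  · simp [slotLabel, hpk]

lemma slotLabel_le {k : ℕ} (hk : k ≤ m) : slotLabel p m k ≤ m := by
  have hsplit := card_filter_add_card_filter_not (s := Iic m) p
  rw [Nat.card_Iic] at hsplit
  by_cases hpk : p k
  · have := (slotLabel_lt_iff hk).2 hpk
    omega
  · have : #((Iio k).filter (¬ p ·)) < #((Iic m).filter (¬ p ·)) := by
      refine card_lt_card ((ssubset_iff_of_subset ?_).2 ⟨k, ?_, ?_⟩)
      · exact filter_subset_filter _ fun x hx => mem_Iic.2 ((mem_Iio.1 hx).le.trans hk)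
      · simp [hk, hpk]
      · simp
    simp only [slotLabel, hpk, if_false]
    omega

lemma slotLabel_injOn : Set.InjOn (slotLabel p m) (Set.Iic m) := by
  intro k hk k' hk' heq
  have hlt := slotLabel_lt_iff (p := p) hk
  have hlt' := slotLabel_lt_iff (p := p) hk'
  by_cases hpk : p k <;> by_cases hpk' : p k'
  · exact slotLabel_strictAntiOn.injOn ⟨hk, hpk⟩ ⟨hk', hpk'⟩ heq
  · exact absurd (heq ▸ hlt.2 hpk) (hlt'.not.2 hpk')
  · exact absurd (heq ▸ hlt'.2 hpk') (hlt.not.2 hpk)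
  · exact slotLabel_strictMonoOn.injOn hpk hpk' heq

lemma slotLabel_eq (hm : p m) {k : ℕ} (hk : k ≤ m) :
    slotLabel p m k = #((Ico k m).filter p) + if p k then 0 else k + 1 := by
  have hIcc : #((Icc k m).filter p) = #((Ico k m).filter p) + 1 := by
    rw [Icc_eq_cons_Ico hk, filter_cons_of_pos _ _ _ _ hm, card_cons]
  by_cases hpk : p k
  · rw [Icc_eq_cons_Ioc hk, filter_cons_of_pos _ _ _ _ hpk, card_cons] at hIcc
    simp only [slotLabel, hpk, if_true]
    omega
  · have hIic : #((Iic m).filter p) = #((Iio k).filter p) + #((Icc k m).filter p) := by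
      rw [← card_filter_add_card_filter_not (s := (Iic m).filter p) (· < k), filter_filter,
        filter_filter]
      congr 2 <;> ext x <;> simp only [mem_filter, mem_Iic, mem_Iio, mem_Icc] <;> grind
    have hIio := card_filter_add_card_filter_not (s := Iio k) p
    rw [Nat.card_Iio] at hIio
    simp only [slotLabel, hpk, if_false]
    omega

end SlotLabel

def slotLabelEquiv (p : ℕ → Prop) (m : ℕ) : Fin (m + 1) ≃ Fin (m + 1) :=
  Equiv.ofBijective (fun k => ⟨slotLabel p m k, Nat.lt_succ_of_le (slotLabel_le k.is_le)⟩)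
    (Finite.injective_iff_bijective.1 fun k k' h =>
      Fin.ext (slotLabel_injOn k.is_le k'.is_le (congrArg Fin.val h)))

-- Permutations are handled through their one-line notation, as words `ℕ → ℕ`, so that index
-- arithmetic is plain `ℕ` arithmetic.

namespace Word

section Statistics

variable (r N : ℕ) (v : ℕ → ℕ)

def rDescents : Finset ℕ :=
  (range N).filter fun i => i + 1 < N ∧ v (i + 1) + r ≤ v i

def rInvCount : ℕ :=
  ∑ i ∈ range N, ∑ j ∈ range N, if i < j ∧ v j < v i ∧ v i < v j + r then 1 else 0

def rmaj : ℕ :=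
  ∑ i ∈ rDescents r N v, (i + 1) + rInvCount r N v

variable {r N v}

@[simp]
lemma mem_rDescents {i : ℕ} : i ∈ rDescents r N v ↔ i + 1 < N ∧ v (i + 1) + r ≤ v i := by
  simp only [rDescents, mem_filter, mem_range]
  omega

end Statistics

def insertAt (u : ℕ → ℕ) (a k : ℕ) (i : ℕ) : ℕ :=
  if i < k then u i else if i = k then a else u (i - 1)

def succAbove (k j : ℕ) : ℕ :=
  if j < k then j else j + 1

lemma val_succAbove {m : ℕ} (k : Fin (m + 1)) (j : Fin m) :
    (k.succAbove j : ℕ) = succAbove k j := by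
  simp only [Fin.succAbove, succAbove, Fin.lt_def, Fin.val_castSucc]
  split_ifs <;> rfl

lemma succAbove_lt_succAbove_iff {k i j : ℕ} : succAbove k i < succAbove k j ↔ i < j := by
  unfold succAbove
  split_ifs <;> omega

lemma lt_succAbove_iff {k j : ℕ} : k < succAbove k j ↔ k ≤ j := by
  unfold succAbove
  split_ifs <;> omega

@[simp]
lemma insertAt_self (u : ℕ → ℕ) (a k : ℕ) : insertAt u a k k = a := by
  simp [insertAt]

@[simp]
lemma insertAt_succAbove (u : ℕ → ℕ) (a k j : ℕ) :
    insertAt u a k (succAbove k j) = u j := by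
  unfold insertAt succAbove
  split_ifs <;> first | rfl | omega

lemma sum_range_succ_eq_add_sum_succAbove {M : Type*} [AddCommMonoid M] {m k : ℕ} (hk : k ≤ m)
    (f : ℕ → M) :
    ∑ i ∈ range (m + 1), f i = f k + ∑ j ∈ range m, f (succAbove k j) := by
  rw [← Fin.sum_univ_eq_sum_range, Fin.sum_univ_succAbove _ ⟨k, Nat.lt_succ_of_le hk⟩,
    ← Fin.sum_univ_eq_sum_range (fun j => f (succAbove k j))]
  simp only [val_succAbove]

variable {r m : ℕ} {u : ℕ → ℕ}

def PreservesRDes (r m : ℕ) (u : ℕ → ℕ) (k : ℕ) : Prop :=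
  k = m ∨ (k < m ∧ m < u k + r) ∨ (0 < k ∧ k < m ∧ u k + r ≤ u (k - 1))

lemma rDescents_insertAt (hu : ∀ i < m, u i < m) {k : ℕ} (hk : k ≤ m) :
    rDescents r (m + 1) (insertAt u m k) =
      ((rDescents r m u).filter (· + 1 < k) ∪
        ((rDescents r m u).filter (k ≤ · + 1)).map (addRightEmbedding 1)) ∪
      ({k} : Finset ℕ).filter (¬ PreservesRDes r m u ·) := by
  ext i
  rcases i with _ | i
  · have := hu 0
    simp only [mem_rDescents, zero_add, lt_add_iff_pos_left, insertAt, tsub_self, zero_tsub,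
      PreservesRDes, not_or, not_and, not_lt, not_le, union_assoc, mem_union, mem_filter, mem_map,
      addRightEmbedding_apply, Nat.add_eq_zero_iff, one_ne_zero, and_false, exists_const,
      mem_singleton, lt_self_iff_false, lt_add_iff_pos_right, IsEmpty.forall_iff, and_true,
      false_or]
    split_ifs <;> omega
  · have := hu i
    have := hu (i + 1)
    simp only [mem_rDescents, Order.lt_add_one_iff, Order.add_one_le_iff, insertAt,
      add_tsub_cancel_right, PreservesRDes, not_or, not_and, not_lt, not_le, union_assoc,
      mem_union, mem_filter, mem_map, addRightEmbedding_apply, Nat.add_right_cancel_iff,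
      exists_eq_right, mem_singleton, lt_add_iff_pos_left, zero_le, forall_const]
    split_ifs <;> omega

lemma sum_rDescents_insertAt {M : Type*} [AddCommMonoid M] (hu : ∀ i < m, u i < m) {k : ℕ}
    (hk : k ≤ m) (g : ℕ → M) :
    ∑ i ∈ rDescents r (m + 1) (insertAt u m k), g i =
      ∑ a ∈ (rDescents r m u).filter (· + 1 < k), g a +
        ∑ a ∈ (rDescents r m u).filter (k ≤ · + 1), g (a + 1) +
        if PreservesRDes r m u k then 0 else g k := by
  have hlow : Disjoint ((rDescents r m u).filter (· + 1 < k))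
      (((rDescents r m u).filter (k ≤ · + 1)).map (addRightEmbedding 1)) := by
    simp only [disjoint_left, mem_filter, mem_map, addRightEmbedding_apply]
    omega
  have hnew : Disjoint ((rDescents r m u).filter (· + 1 < k) ∪
      ((rDescents r m u).filter (k ≤ · + 1)).map (addRightEmbedding 1))
      (({k} : Finset ℕ).filter (¬ PreservesRDes r m u ·)) := by
    simp only [disjoint_right, mem_filter, mem_singleton, mem_union, mem_map,
      addRightEmbedding_apply]
    rintro _ ⟨rfl, hnp⟩ (⟨-, hlt⟩ | ⟨a, ⟨ha, -⟩, rfl⟩)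
    · omega
    · rw [mem_rDescents] at ha
      exact hnp (Or.inr (Or.inr ⟨a.succ_pos, ha.1, by simpa using ha.2⟩))
  rw [rDescents_insertAt hu hk, sum_union hnew, sum_union hlow, sum_map,
    sum_filter (s := {k}), sum_singleton, ite_not]
  rfl

lemma card_rDescents_insertAt (hu : ∀ i < m, u i < m) {k : ℕ} (hk : k ≤ m) :
    #(rDescents r (m + 1) (insertAt u m k)) =
      #(rDescents r m u) + if PreservesRDes r m u k then 0 else 1 := by
  have h := sum_rDescents_insertAt (r := r) hu hk (fun _ => 1)
  simp only [sum_const, smul_eq_mul, mul_one] at h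
  rw [h, ← card_filter_add_card_filter_not (s := rDescents r m u) (· + 1 < k)]
  simp only [not_lt]

lemma sum_succ_rDescents_insertAt (hu : ∀ i < m, u i < m) {k : ℕ} (hk : k ≤ m) :
    ∑ i ∈ rDescents r (m + 1) (insertAt u m k), (i + 1) =
      ∑ a ∈ rDescents r m u, (a + 1) + #((rDescents r m u).filter (k ≤ · + 1)) +
        if PreservesRDes r m u k then 0 else k + 1 := by
  rw [sum_rDescents_insertAt hu hk,
    ← sum_filter_add_sum_filter_not (rDescents r m u) (· + 1 < k), card_eq_sum_ones]
  simp only [not_lt, sum_add_distrib]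
  ring

lemma rInvCount_insertAt (hu : ∀ i < m, u i < m) {k : ℕ} (hk : k ≤ m) :
    rInvCount r (m + 1) (insertAt u m k) =
      rInvCount r m u + #((Ico k m).filter (m < u · + r)) := by
  have hrow : ∀ b ∈ range m, (if k ≤ b ∧ u b < m ∧ m < u b + r then 1 else 0) =
      if k ≤ b ∧ m < u b + r then 1 else 0 := fun b hb => by
    simp [hu b (mem_range.1 hb)]
  have hcol : ∀ b ∈ range m,
      (if succAbove k b < k ∧ m < u b ∧ u b < m + r then 1 else 0) = 0 :=
    fun b hb => if_neg fun h => (hu b (mem_range.1 hb)).not_gt h.2.1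
  unfold rInvCount
  simp_rw [sum_range_succ_eq_add_sum_succAbove hk, insertAt_self, insertAt_succAbove,
    succAbove_lt_succAbove_iff, lt_succAbove_iff, lt_irrefl, false_and, if_false, zero_add,
    sum_add_distrib, sum_congr rfl hrow, sum_congr rfl hcol]
  rw [sum_const_zero, zero_add, add_comm, ← card_filter]
  congr 2
  ext b
  simp only [mem_filter, mem_range, mem_Ico]
  omega

lemma filter_preservesRDes_eq (k : ℕ) :
    (Ico k m).filter (PreservesRDes r m u) =
      ((rDescents r m u).filter (k ≤ · + 1)).map (addRightEmbedding 1) ∪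
        (Ico k m).filter (m < u · + r) := by
  ext x
  simp only [mem_union, mem_filter, mem_map, mem_Ico]
  rcases x with _ | x
  · simp only [nonpos_iff_eq_zero, PreservesRDes, lt_self_iff_false, zero_tsub,
      add_le_iff_nonpos_right, false_and, or_false, mem_rDescents, addRightEmbedding_apply,
      Nat.add_eq_zero_iff, one_ne_zero, and_false, exists_const, false_or, and_congr_right_iff,
      and_imp]
    omega
  · simp only [PreservesRDes, lt_add_iff_pos_left, Order.lt_add_one_iff, zero_le,
      add_tsub_cancel_right, true_and, mem_rDescents, addRightEmbedding_apply,
      Nat.add_right_cancel_iff, exists_eq_right]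
    omega

lemma card_filter_preservesRDes (hu : ∀ i < m, u i < m) (k : ℕ) :
    #((Ico k m).filter (PreservesRDes r m u)) =
      #((rDescents r m u).filter (k ≤ · + 1)) + #((Ico k m).filter (m < u · + r)) := by
  rw [filter_preservesRDes_eq, card_union_of_disjoint, card_map]
  simp only [disjoint_left, mem_map, mem_filter, mem_rDescents, mem_Ico, addRightEmbedding_apply]
  rintro _ ⟨a, ⟨⟨ha, hdesc⟩, -⟩, rfl⟩ ⟨-, hlarge⟩
  have := hu a (by omega)
  omega

lemma card_preservesRDes (hu : ∀ i < m, u i < m) :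
    #((Iic m).filter (PreservesRDes r m u)) =
      #(rDescents r m u) + 1 + #((range m).filter (m < u · + r)) := by
  have h := card_filter_preservesRDes (r := r) hu 0
  simp only [zero_le, filter_true, ← range_eq_Ico] at h
  rw [← Nat.range_succ_eq_Iic, range_add_one, filter_insert,
    if_pos (show PreservesRDes r m u m from Or.inl rfl), card_insert_of_notMem (by simp), h]
  omega

lemma rmaj_insertAt (hu : ∀ i < m, u i < m) {k : ℕ} (hk : k ≤ m) :
    rmaj r (m + 1) (insertAt u m k) = rmaj r m u +
      (#((Ico k m).filter (PreservesRDes r m u)) +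
        if PreservesRDes r m u k then 0 else k + 1) := by
  rw [rmaj, rmaj, sum_succ_rDescents_insertAt hu hk, rInvCount_insertAt hu hk,
    card_filter_preservesRDes hu]
  ring

end Word

/-- One-line notation of `σ`, set to `0` off `[0, N)`. -/
def word {N : ℕ} (σ : Perm (Fin N)) (i : ℕ) : ℕ :=
  if h : i < N then σ ⟨i, h⟩ else 0

@[simp]
lemma word_val {N : ℕ} (σ : Perm (Fin N)) (i : Fin N) : word σ i = σ i :=
  dif_pos i.isLt

lemma word_lt {m : ℕ} (π : Perm (Fin m)) : ∀ i < m, word π i < m := fun i hi => by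
  simp [word, hi]

lemma sum_fin_prod_eq_sum_range {M : Type*} [AddCommMonoid M] (N : ℕ) (F : ℕ → ℕ → M) :
    ∑ p : Fin N × Fin N, F p.1 p.2 = ∑ i ∈ range N, ∑ j ∈ range N, F i j := by
  rw [Fintype.sum_prod_type, ← Fin.sum_univ_eq_sum_range (fun i => ∑ j ∈ range N, F i j)]
  simp only [Fin.sum_univ_eq_sum_range]

lemma sum_desSet_eq {M : Type*} [AddCommMonoid M] {N : ℕ} (r : ℕ) (σ : Perm (Fin N))
    (g : ℕ → M) :
    ∑ p ∈ desSet r σ, g p.1 = ∑ i ∈ Word.rDescents r N (word σ), g i := by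
  rw [desSet, sum_filter]
  simp only [← word_val]
  rw [sum_fin_prod_eq_sum_range N
    (fun i j => if j = i + 1 ∧ word σ j + r ≤ word σ i then g i else 0)]
  simp only [ite_and, sum_ite_eq', mem_range, Word.rDescents, sum_filter]

lemma rdes_eq_card_rDescents {N : ℕ} (r : ℕ) (σ : Perm (Fin N)) :
    rdes r σ = #(Word.rDescents r N (word σ)) := by
  simpa [rdes] using sum_desSet_eq r σ (fun _ => (1 : ℕ))

lemma rmaj_eq_rmaj_word {N : ℕ} (r : ℕ) (σ : Perm (Fin N)) :
    rmaj r σ = Word.rmaj r N (word σ) := by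
  rw [rmaj, Word.rmaj, sum_desSet_eq r σ (· + 1), Word.rInvCount, card_filter]
  simp only [← word_val, Fin.lt_def]
  rw [sum_fin_prod_eq_sum_range N
    (fun i j => if i < j ∧ word σ j < word σ i ∧ word σ i < word σ j + r then 1 else 0)]

lemma card_filter_lt_word_add {m : ℕ} (π : Perm (Fin m)) (r : ℕ) :
    #((range m).filter (m < word π · + r)) = min m (r - 1) := by
  rw [card_filter, ← Fin.sum_univ_eq_sum_range (fun b => if m < word π b + r then 1 else 0)]
  simp only [word_val]
  rw [Equiv.sum_comp π (fun v => if m < (v : ℕ) + r then 1 else 0),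
    Fin.sum_univ_eq_sum_range (fun v => if m < v + r then 1 else 0), ← card_filter]
  have : (range m).filter (m < · + r) = Ico (m + 1 - r) m := by
    ext v
    simp only [mem_filter, mem_range, mem_Ico]
    omega
  rw [this, Nat.card_Ico]
  omega

def insertMax {m : ℕ} (π : Perm (Fin m)) (k : Fin (m + 1)) : Perm (Fin (m + 1)) :=
  (finSuccEquiv' k).trans ((Equiv.optionCongr π).trans (finSuccEquiv' (Fin.last m)).symm)

section InsertMax

variable {m : ℕ} (π : Perm (Fin m)) (k : Fin (m + 1))

@[simp]
lemma insertMax_self : insertMax π k k = Fin.last m := by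
  simp [insertMax]

@[simp]
lemma insertMax_succAbove (j : Fin m) : insertMax π k (k.succAbove j) = (π j).castSucc := by
  simp [insertMax]

lemma insertMax_symm_last : (insertMax π k).symm (Fin.last m) = k := by
  rw [Equiv.symm_apply_eq, insertMax_self]

lemma word_insertMax : word (insertMax π k) = Word.insertAt (word π) m k := by
  funext i
  by_cases hi : i < m + 1
  · obtain ⟨x, rfl⟩ : ∃ x : Fin (m + 1), (x : ℕ) = i := ⟨⟨i, hi⟩, rfl⟩
    rcases eq_or_ne x k with rfl | hne
    · simp
    · obtain ⟨j, rfl⟩ := Fin.exists_succAbove_eq hne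
      rw [word_val, insertMax_succAbove, Word.val_succAbove, Word.insertAt_succAbove,
        Fin.val_castSucc, word_val]
  · rw [word, dif_neg hi, Word.insertAt, if_neg (by omega), if_neg (by omega), word,
      dif_neg (by omega)]

variable {r : ℕ}

lemma rdes_insertMax :
    rdes r (insertMax π k) = rdes r π + if Word.PreservesRDes r m (word π) k then 0 else 1 := by
  rw [rdes_eq_card_rDescents, rdes_eq_card_rDescents, word_insertMax,
    Word.card_rDescents_insertAt (word_lt π) k.is_le]

lemma rmaj_insertMax :
    rmaj r (insertMax π k) = rmaj r π + slotLabel (Word.PreservesRDes r m (word π)) m k := by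
  rw [rmaj_eq_rmaj_word, rmaj_eq_rmaj_word, word_insertMax, Word.rmaj_insertAt (word_lt π) k.is_le,
    slotLabel_eq (Or.inl rfl) k.is_le]

end InsertMax

lemma bijective_insertMax {m : ℕ} :
    Function.Bijective fun p : Perm (Fin m) × Fin (m + 1) => insertMax p.1 p.2 := by
  rw [Fintype.bijective_iff_injective_and_card]
  refine ⟨?_, by simp [Fintype.card_perm, Nat.factorial_succ, mul_comm]⟩
  rintro ⟨π, k⟩ ⟨π', k'⟩ h
  simp only at h
  obtain rfl : k = k' := by rw [← insertMax_symm_last π k, h, insertMax_symm_last]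
  refine Prod.ext (Equiv.ext fun j => Fin.castSucc_injective _ ?_) rfl
  rw [← insertMax_succAbove, h, insertMax_succAbove]

lemma preservesRDes_iff_slotLabel_lt {r m : ℕ} (π : Perm (Fin m)) (hr : 1 ≤ r) {k : ℕ}
    (hk : k ≤ m) :
    Word.PreservesRDes r m (word π) k ↔
      slotLabel (Word.PreservesRDes r m (word π)) m k < rdes r π + r := by
  rw [← slotLabel_lt_iff (p := Word.PreservesRDes r m (word π)) hk,
    Word.card_preservesRDes (word_lt π), card_filter_lt_word_add, ← rdes_eq_card_rDescents]
  have := slotLabel_le (p := Word.PreservesRDes r m (word π)) hk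
  omega

/-- Rawlings's insertion lemma (n = m+1). -/
theorem rawlings_insertion (r m : ℕ) (hr : 1 ≤ r) :
    ∃ φ : Perm (Fin m) × Fin (m + 1) → Perm (Fin (m + 1)),
      Function.Bijective φ ∧
      ∀ (π : Perm (Fin m)) (c : Fin (m + 1)),
        (((c : ℕ) + 1 ≤ rdes r π + r → rdes r (φ (π, c)) = rdes r π) ∧
         (rdes r π + r < (c : ℕ) + 1 → rdes r (φ (π, c)) = rdes r π + 1)) ∧
        rmaj r (φ (π, c)) = rmaj r π + (c : ℕ) := by
  let label (π : Perm (Fin m)) := slotLabelEquiv (Word.PreservesRDes r m (word π)) m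
  refine ⟨(fun p => insertMax p.1 p.2) ∘
      Equiv.prodShear (Equiv.refl _) fun π => (label π).symm,
    bijective_insertMax.comp (Equiv.bijective _), fun π c => ?_⟩
  obtain ⟨k, rfl⟩ := (label π).surjective c
  have hlabel : (label π k : ℕ) = slotLabel (Word.PreservesRDes r m (word π)) m k := rfl
  simp only [Function.comp_apply, Equiv.prodShear_apply, Equiv.refl_apply, Equiv.symm_apply_apply,
    rdes_insertMax, rmaj_insertMax, preservesRDes_iff_slotLabel_lt π hr k.is_le, hlabel,
    and_true]
  refine ⟨fun h => ?_, fun h => ?_⟩ <;> split_ifs <;> omega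

end

end PaperStat
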